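/- Let G be a Lie 2-group. For a left-invariant vector field u on the Lie group G₀, the pair q(u) = (q(u)₀, q(u)₁) with q(u)₀ = u and q(u)₁(γ) = T𝓛_γ(T1(u(e₀))) is a multiplicative vector field on the Lie groupoid G, i.e., a functor q(u): G → TG with π_G ∘ q(u) = id_G. -/

import Mathlib

/-!
STATEMENT 11: Let `G` be a Lie 2-group.  For a left-invariant vector field `u` on the
Lie group `G₀`, the pair `q(u) = (q(u)₀, q(u)₁)` with `q(u)₀ = u` and
`q(u)₁(γ) = T𝓛_γ(T1(u(e₀)))` is a multiplicative vector field on the Lie groupoid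
`G`: a functor `q(u) : G → TG` with `π_G ∘ q(u) = id_G`.

We work in an algebraic model of the tangent 2-group: `TT` models `TG`, `ζ` the zero
section, `π` the projection; a vector field on `G₀` is a section `u : G0 → TG0` of
`π₀`; left invariance means `u(x·a) = T𝓛_x(u(a)) = ζ₀(x)·u(a)`; `T1 = TT.e`; and
`T𝓛_γ(v) = ζ₁(γ)·v`.
-/

/-- A strict 2-group: a category internal to the category of groups.
`A0` is the group of objects, `A1` the group of arrows; source, target and unit are
group homomorphisms, and the (total extension of the) composition `comp σ γ`
(meaning `σ ∗ γ`, defined when `s σ = t γ`) satisfies the usual category axioms and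
the interchange law (which expresses that `∗ : G₂ → G₁` is a group homomorphism). -/
structure TwoGp (A0 A1 : Type*) [Group A0] [Group A1] where
  s : A1 →* A0
  t : A1 →* A0
  e : A0 →* A1
  s_e : ∀ x, s (e x) = x
  t_e : ∀ x, t (e x) = x
  comp : A1 → A1 → A1
  s_comp : ∀ {σ γ}, s σ = t γ → s (comp σ γ) = s γ
  t_comp : ∀ {σ γ}, s σ = t γ → t (comp σ γ) = t σ
  comp_e_left : ∀ γ, comp (e (t γ)) γ = γ
  comp_e_right : ∀ σ, comp σ (e (s σ)) = σ
  assoc : ∀ {σ₃ σ₂ σ₁}, s σ₃ = t σ₂ → s σ₂ = t σ₁ →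
    comp (comp σ₃ σ₂) σ₁ = comp σ₃ (comp σ₂ σ₁)
  interchange : ∀ {σ₂ σ₁ γ₂ γ₁ : A1}, s σ₂ = t σ₁ → s γ₂ = t γ₁ →
    comp σ₂ σ₁ * comp γ₂ γ₁ = comp (σ₂ * γ₂) (σ₁ * γ₁)
/-- A homomorphism of strict 2-groups: a functor internal to the category of groups. -/
structure TwoGpHom {A0 A1 B0 B1 : Type*} [Group A0] [Group A1] [Group B0] [Group B1]
    (T : TwoGp A0 A1) (U : TwoGp B0 B1) where
  f0 : A0 →* B0
  f1 : A1 →* B1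
  map_s : ∀ γ, U.s (f1 γ) = f0 (T.s γ)
  map_t : ∀ γ, U.t (f1 γ) = f0 (T.t γ)
  map_e : ∀ x, f1 (T.e x) = U.e (f0 x)
  map_comp : ∀ {σ γ}, T.s σ = T.t γ → f1 (T.comp σ γ) = U.comp (f1 σ) (f1 γ)

/-- An (algebraic model of the) tangent 2-group `TG` of a Lie 2-group `G = T`:
`TT` models the tangent groupoid `TG` (which is again a 2-group, with multiplication
`Tm`, unit `T1` and composition `⋆ = T∗`), `ζ` models the zero section `G → TG`
(a homomorphism of 2-groups), and `π` models the projection `TG → G` (a homomorphism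
of 2-groups with `π ∘ ζ = id`).  In this model, for `γ ∈ G₁` and `v ∈ TG₁`, the
derivative of left translation acts by `T𝓛_γ(v) = Tm(0_γ, v) = ζ₁(γ) * v`, and
similarly on `TG₀`; the unit map `T1 : TG₀ → TG₁` is `TT.e`. -/
structure TangentModel {G0 G1 TG0 TG1 : Type*}
    [Group G0] [Group G1] [Group TG0] [Group TG1]
    (T : TwoGp G0 G1) (TT : TwoGp TG0 TG1) where
  ζ : TwoGpHom T TT
  π : TwoGpHom TT T
  π_ζ0 : ∀ x, π.f0 (ζ.f0 x) = x
  π_ζ1 : ∀ γ, π.f1 (ζ.f1 γ) = γ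

/-! `q(u)₁` is right multiplication of the zero section by the unit arrow `T1(u(e₀))`.
Right multiplication by a unit arrow commutes with composition (interchange law together
with `e x ∗ e x = e x`), and left invariance, `u x = 0ₓ · u(e₀)`, matches sources, targets and
units with `u`. -/

namespace TwoGp

variable {A0 A1 : Type*} [Group A0] [Group A1] (T : TwoGp A0 A1)

theorem comp_e_self (x : A0) : T.comp (T.e x) (T.e x) = T.e x := by
  simpa only [T.t_e] using T.comp_e_left (T.e x)

theorem comp_mul_e {σ γ : A1} (h : T.s σ = T.t γ) (x : A0) :
    T.comp (σ * T.e x) (γ * T.e x) = T.comp σ γ * T.e x := by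
  rw [← T.interchange h (by rw [T.s_e, T.t_e]), T.comp_e_self]

end TwoGp

theorem TwoGpHom.map_composable {A0 A1 B0 B1 : Type*} [Group A0] [Group A1] [Group B0]
    [Group B1] {T : TwoGp A0 A1} {U : TwoGp B0 B1} (f : TwoGpHom T U) {σ γ : A1}
    (h : T.s σ = T.t γ) : U.s (f.f1 σ) = U.t (f.f1 γ) := by
  rw [f.map_s, f.map_t, h]

theorem q_multiplicative {G0 G1 TG0 TG1 : Type*}
    [Group G0] [Group G1] [Group TG0] [Group TG1]
    (T : TwoGp G0 G1) (TT : TwoGp TG0 TG1) (M : TangentModel T TT)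
    (u : G0 → TG0)
    (hsec : ∀ x, M.π.f0 (u x) = x)                    -- `u` is a vector field on `G₀`
    (hinv : ∀ x a, u (x * a) = M.ζ.f0 x * u a) :      -- `u` is left-invariant
    -- `q(u) = (u, q1)` with `q1 γ := T𝓛_γ(T1(u(e₀))) = ζ₁(γ) · TT.e (u 1)`
    -- is a multiplicative vector field, i.e. a functor `G → TG` over `id_G`:
    (∀ γ, M.π.f1 (M.ζ.f1 γ * TT.e (u 1)) = γ) ∧
    (∀ γ, TT.s (M.ζ.f1 γ * TT.e (u 1)) = u (T.s γ)) ∧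
    (∀ γ, TT.t (M.ζ.f1 γ * TT.e (u 1)) = u (T.t γ)) ∧
    (∀ x, M.ζ.f1 (T.e x) * TT.e (u 1) = TT.e (u x)) ∧
    (∀ σ γ, T.s σ = T.t γ →
      M.ζ.f1 (T.comp σ γ) * TT.e (u 1) =
        TT.comp (M.ζ.f1 σ * TT.e (u 1)) (M.ζ.f1 γ * TT.e (u 1))) := by
  have hu : ∀ x, M.ζ.f0 x * u 1 = u x := fun x => by rw [← hinv, mul_one]
  refine ⟨fun γ => ?_, fun γ => ?_, fun γ => ?_, fun x => ?_, fun σ γ h => ?_⟩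
  · rw [map_mul, M.π_ζ1, M.π.map_e, hsec, map_one, mul_one]
  · rw [map_mul, TT.s_e, M.ζ.map_s, hu]
  · rw [map_mul, TT.t_e, M.ζ.map_t, hu]
  · rw [M.ζ.map_e, ← map_mul, hu]
  · rw [M.ζ.map_comp h, TT.comp_mul_e (M.ζ.map_composable h)]
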